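/- Let (v₁, v₂) ∈ 𝕆 × 𝕆 satisfy |v₁|² + |v₂|² = 1 and v₂ ≠ −e₀. Define the Cayley image x = √2 ((e₀+v₂)⁻¹ v₁) and y = −((e₀−v₂)(e₀+v₂)⁻¹). Then (x,y) lies on the boundary of the octonionic Siegel domain, i.e. 2 Re y + |x|² = 0. -/

import Mathlib

open scoped BigOperators
open Matrix

noncomputable section

namespace OC

/-- Octonions, identified with ℝ⁸. -/
abbrev Octo : Type := Fin 8 → ℝ

/-- The seven positively-oriented triples Ω. -/
def OmegaT : List (Fin 8 × Fin 8 × Fin 8) :=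
  [(1,2,3),(2,4,6),(4,3,5),(3,6,7),(6,5,1),(5,7,2),(7,1,4)]

/-- The six permutations of a triple, with their signs. -/
def signedPerms3 (t : Fin 8 × Fin 8 × Fin 8) : List (ℝ × (Fin 8 × Fin 8 × Fin 8)) :=
  [(1,(t.1,t.2.1,t.2.2)), (1,(t.2.1,t.2.2,t.1)), (1,(t.2.2,t.1,t.2.1)),
   (-1,(t.2.1,t.1,t.2.2)), (-1,(t.1,t.2.2,t.2.1)), (-1,(t.2.2,t.2.1,t.1))]

/-- The totally antisymmetric symbol ε with ε(α,β,γ) = 1 on Ω and vanishing on triples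
that are not permutations of a triple of Ω. -/
def eps (a b c : Fin 8) : ℝ :=
  (((OmegaT.map signedPerms3).flatten).map (fun p => if p.2 = (a,b,c) then p.1 else 0)).sum

/-- Coefficient of `e d` in the product `e a * e b`: `e 0` is a two-sided unit and
`e α * e β = -δ_{αβ} e 0 + ∑ γ, ε(α,β,γ) e γ` for imaginary indices. -/
def mulCoef (a b d : Fin 8) : ℝ :=
  if a = 0 then (if d = b then 1 else 0)
  else if b = 0 then (if d = a then 1 else 0)
  else (if a = b ∧ d = 0 then -1 else 0) + eps a b d

/-- Octonion multiplication on ℝ⁸. -/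
def omul (x y : Octo) : Octo := fun d => ∑ a, ∑ b, x a * y b * mulCoef a b d

/-- The standard basis octonions e₀,…,e₇. -/
def e (a : Fin 8) : Octo := fun d => if d = a then 1 else 0

/-- Real part. -/
def reO (x : Octo) : ℝ := x 0

/-- Imaginary part. -/
def imO (x : Octo) : Octo := fun d => if d = 0 then 0 else x d

/-- Octonion conjugation. -/
def conjO (x : Octo) : Octo := fun d => if d = 0 then x 0 else -x d

/-- Squared Euclidean norm |x|². -/
def normSq (x : Octo) : ℝ := ∑ a, (x a)^2

/-- Inverse of a nonzero octonion, q⁻¹ = q̄ / |q|². -/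
def oinv (q : Octo) : Octo := (normSq q)⁻¹ • conjO q

/-- The seven quadruples Λ. -/
def LambdaT : List (Fin 8 × Fin 8 × Fin 8 × Fin 8) :=
  [(5,4,6,7),(7,3,5,1),(1,6,7,2),(2,5,1,4),(4,7,2,3),(3,1,4,6),(6,2,5,3)]

/-- The 24 permutations of a quadruple, with their signs. -/
def signedPerms4 (t : Fin 8 × Fin 8 × Fin 8 × Fin 8) :
    List (ℝ × (Fin 8 × Fin 8 × Fin 8 × Fin 8)) :=
  let a := t.1; let b := t.2.1; let c := t.2.2.1; let d := t.2.2.2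
  [ (1,(a,b,c,d)), (-1,(a,b,d,c)), (-1,(a,c,b,d)), (1,(a,c,d,b)), (1,(a,d,b,c)), (-1,(a,d,c,b)),
    (-1,(b,a,c,d)), (1,(b,a,d,c)), (1,(b,c,a,d)), (-1,(b,c,d,a)), (-1,(b,d,a,c)), (1,(b,d,c,a)),
    (1,(c,a,b,d)), (-1,(c,a,d,b)), (-1,(c,b,a,d)), (1,(c,b,d,a)), (1,(c,d,a,b)), (-1,(c,d,b,a)),
    (-1,(d,a,b,c)), (1,(d,a,c,b)), (1,(d,b,a,c)), (-1,(d,b,c,a)), (-1,(d,c,a,b)), (1,(d,c,b,a)) ]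

/-- The totally antisymmetric symbol ε₄ with value 1 on Λ and vanishing on quadruples
that are not permutations of a quadruple of Λ. -/
def eps4 (a b c d : Fin 8) : ℝ :=
  (((LambdaT.map signedPerms4).flatten).map (fun p => if p.2 = (a,b,c,d) then p.1 else 0)).sum

/-- Matrix of left multiplication by `e a`: `(Imat a) d c` is the coefficient of `e d` in
`e a * e c`. -/
def Imat (a : Fin 8) : Matrix (Fin 8) (Fin 8) ℝ := Matrix.of fun d c => mulCoef a c d

/-- Octonionic Heisenberg group multiplication on 𝕆 × Im 𝕆 (realized inside 𝕆 × 𝕆):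
`(x,t)·(y,s) = (x+y, t+s+2 Im(x ȳ))`. -/
def hmul (p q : Octo × Octo) : Octo × Octo :=
  (p.1 + q.1, p.2 + q.2 + (2:ℝ) • imO (omul p.1 (conjO q.1)))

/-- Group inverse in the octonionic Heisenberg group. -/
def hinv (p : Octo × Octo) : Octo × Octo := (-p.1, -p.2)

/-- Homogeneous norm ‖(x,t)‖ = (|x|⁴+|t|²)^{1/4}. -/
def hnorm (p : Octo × Octo) : ℝ := ((normSq p.1)^2 + normSq p.2) ^ ((1:ℝ)/4)

/-- The inversion R(x,t) = (−((|x|²e₀ − t)⁻¹)x, −t/(|x|⁴+|t|²)). -/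
def Rmap (p : Octo × Octo) : Octo × Octo :=
  (-(omul (oinv (normSq p.1 • e 0 - p.2)) p.1),
   -(((normSq p.1)^2 + normSq p.2)⁻¹ • p.2))

/-- E^β = I_β for β ∈ {1,…,7}, indexed here by `Fin 7` via `β ↦ β+1`. -/
def E7 (β : Fin 7) : Matrix (Fin 8) (Fin 8) ℝ := Imat β.succ

/-- Octonionic Heisenberg group multiplication in ℝ⁸ × ℝ⁷ coordinates. -/
def hmulC (p q : (Fin 8 → ℝ) × (Fin 7 → ℝ)) : (Fin 8 → ℝ) × (Fin 7 → ℝ) :=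
  (p.1 + q.1, fun β => p.2 β + q.2 β + 2 * ∑ a, ∑ b, E7 β a b * p.1 a * q.1 b)

/-- The left-invariant horizontal vector fields
`X_a = ∂/∂x_a + 2 ∑_{β,b} (E^β)_{ba} x_b ∂/∂t_β`. -/
def Xop (a : Fin 8) (f : ((Fin 8 → ℝ) × (Fin 7 → ℝ)) → ℝ)
    (p : (Fin 8 → ℝ) × (Fin 7 → ℝ)) : ℝ :=
  fderiv ℝ f p ((Pi.single a 1 : Fin 8 → ℝ), (0 : Fin 7 → ℝ))
    + 2 * ∑ β : Fin 7, ∑ b : Fin 8,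
        E7 β b a * p.1 b * fderiv ℝ f p ((0 : Fin 8 → ℝ), (Pi.single β 1 : Fin 7 → ℝ))

/-- ρ(x,t) = |x|⁴ + |t|². -/
def rho (p : (Fin 8 → ℝ) × (Fin 7 → ℝ)) : ℝ :=
  (∑ a, (p.1 a)^2)^2 + ∑ β, (p.2 β)^2

/-! With `q = e₀ + v₂` and `q⁻¹ = q̄ / |q|²`, multiplicativity of the octonion norm gives
`|x|² = 2 |v₁|² / |q|²`, while `Re (a b̄) = ⟨a, b⟩` gives
`Re y = -⟨e₀ - v₂, e₀ + v₂⟩ / |q|² = -(1 - |v₂|²) / |q|²`.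
On the unit sphere `|v₁|² = 1 - |v₂|²`, so the two terms cancel. -/

set_option maxHeartbeats 800000 in
theorem omul_eq (x y : Octo) : omul x y =
    ![x 0 * y 0 - x 1 * y 1 - x 2 * y 2 - x 3 * y 3 - x 4 * y 4 - x 5 * y 5 - x 6 * y 6 - x 7 * y 7,
      x 0 * y 1 + x 1 * y 0 + x 2 * y 3 - x 3 * y 2 + x 4 * y 7 - x 5 * y 6 + x 6 * y 5 - x 7 * y 4,
      x 0 * y 2 - x 1 * y 3 + x 2 * y 0 + x 3 * y 1 + x 4 * y 6 + x 5 * y 7 - x 6 * y 4 - x 7 * y 5,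
      x 0 * y 3 + x 1 * y 2 - x 2 * y 1 + x 3 * y 0 - x 4 * y 5 + x 5 * y 4 + x 6 * y 7 - x 7 * y 6,
      x 0 * y 4 - x 1 * y 7 - x 2 * y 6 + x 3 * y 5 + x 4 * y 0 - x 5 * y 3 + x 6 * y 2 + x 7 * y 1,
      x 0 * y 5 + x 1 * y 6 - x 2 * y 7 - x 3 * y 4 + x 4 * y 3 + x 5 * y 0 - x 6 * y 1 + x 7 * y 2,
      x 0 * y 6 - x 1 * y 5 + x 2 * y 4 - x 3 * y 7 - x 4 * y 2 + x 5 * y 1 + x 6 * y 0 + x 7 * y 3,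
      x 0 * y 7 + x 1 * y 4 + x 2 * y 5 + x 3 * y 6 - x 4 * y 1 - x 5 * y 2 - x 6 * y 3 + x 7 * y 0] := by
  funext d
  fin_cases d <;>
  · simp only [omul, Fin.sum_univ_eight]
    simp +decide [mulCoef, eps, OmegaT, signedPerms3]
    ring

theorem omul_smul_left (c : ℝ) (x y : Octo) : omul (c • x) y = c • omul x y := by
  funext d
  simp only [omul, Pi.smul_apply, smul_eq_mul, Finset.mul_sum]
  exact Finset.sum_congr rfl fun a _ => Finset.sum_congr rfl fun b _ => by ring

theorem omul_smul_right (c : ℝ) (x y : Octo) : omul x (c • y) = c • omul x y := by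
  funext d
  simp only [omul, Pi.smul_apply, smul_eq_mul, Finset.mul_sum]
  exact Finset.sum_congr rfl fun a _ => Finset.sum_congr rfl fun b _ => by ring

theorem normSq_eq_dotProduct (x : Octo) : normSq x = x ⬝ᵥ x := by
  simp only [normSq, dotProduct, sq]

theorem normSq_smul (c : ℝ) (x : Octo) : normSq (c • x) = c ^ 2 * normSq x := by
  simp only [normSq, Pi.smul_apply, smul_eq_mul, Finset.mul_sum]
  exact Finset.sum_congr rfl fun a _ => by ring

theorem normSq_conjO (x : Octo) : normSq (conjO x) = normSq x := by
  simp only [normSq, conjO]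
  exact Finset.sum_congr rfl fun a _ => by split_ifs with ha <;> simp [ha]

-- Degen's eight-square identity.
theorem normSq_omul (x y : Octo) : normSq (omul x y) = normSq x * normSq y := by
  simp only [normSq, Fin.sum_univ_eight, omul_eq, Matrix.cons_val]
  ring

theorem normSq_omul_oinv_left (q x : Octo) :
    normSq (omul (oinv q) x) = normSq x / normSq q := by
  rw [oinv, omul_smul_left, normSq_smul, normSq_omul, normSq_conjO]
  have h := mul_inv_mul_cancel (normSq q)⁻¹
  rw [inv_inv] at h
  linear_combination normSq x * h

theorem reO_neg (x : Octo) : reO (-x) = -reO x := rfl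

theorem reO_smul (c : ℝ) (x : Octo) : reO (c • x) = c * reO x := rfl

theorem reO_omul_conjO (x y : Octo) : reO (omul x (conjO y)) = x ⬝ᵥ y := by
  simp [reO, omul_eq, conjO, dotProduct, Fin.sum_univ_eight]

theorem reO_omul_oinv (x q : Octo) : reO (omul x (oinv q)) = x ⬝ᵥ q / normSq q := by
  rw [oinv, omul_smul_right, reO_smul, reO_omul_conjO]
  ring

theorem e_zero_sub_dotProduct_e_zero_add (v : Octo) :
    (e 0 - v) ⬝ᵥ (e 0 + v) = 1 - normSq v := by
  have he : e 0 ⬝ᵥ e 0 = 1 := by simp [dotProduct, e]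
  rw [normSq_eq_dotProduct, sub_dotProduct, dotProduct_add, dotProduct_add, he,
    dotProduct_comm v (e 0)]
  ring

theorem cayley_boundary_general (v₁ v₂ : Octo) (h : normSq v₁ + normSq v₂ = 1) :
    2 * reO (-(omul (e 0 - v₂) (oinv (e 0 + v₂))))
      + normSq (Real.sqrt 2 • omul (oinv (e 0 + v₂)) v₁) = 0 := by
  rw [reO_neg, reO_omul_oinv, e_zero_sub_dotProduct_e_zero_add, normSq_smul,
    normSq_omul_oinv_left, Real.sq_sqrt zero_le_two]
  linear_combination (2 / normSq (e 0 + v₂)) * h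

/-- The Cayley transform maps the unit sphere (minus the south pole) to
the boundary of the octonionic Siegel domain: 2 Re y + |x|² = 0. -/
theorem cayley_boundary (v₁ v₂ : Octo) (h : normSq v₁ + normSq v₂ = 1)
    (hv : v₂ ≠ -e 0) :
    2 * reO (-(omul (e 0 - v₂) (oinv (e 0 + v₂))))
      + normSq (Real.sqrt 2 • omul (oinv (e 0 + v₂)) v₁) = 0 :=
  cayley_boundary_general v₁ v₂ h

end OC
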